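/- arXiv:2108.00971 — 2 statements merged into one kernel-verified Lean document; each statement's English description precedes it below -/
import Mathlib

section
/- Let v₁, v₂, v₃ ∈ ℝ² be the vertices of a nondegenerate triangle (i.e., they are affinely independent), and let λ(x) = (λ₁(x), λ₂(x), λ₃(x)) denote the barycentric coordinates of a point x ∈ ℝ² with respect to this triangle. Then for every natural number d, the family of functions x ↦ ψ_{I,d}(λ(x)), indexed by multi-indices I=(i,j,k) with i+j+k=d, is a basis of the real vector space of polynomial functions on ℝ² of total degree at most d; in particular, every bivariate polynomial f of total degree at most d has a unique representation f(x) = Σ_{|I|=d} b_I ψ_{I,d}(λ(x)) with real Bézier ordinates b_I. -/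
/-!
The barycentric coordinates are affine functions of `x`, so every `ψ_{I,d}(λ(x))` is a polynomial
of degree at most `d`. Conversely, `x = ∑ λᵢ vᵢ` and `1 = ∑ λᵢ` turn every monomial in `x` of
degree at most `d` into a form of degree exactly `d` in `λ`, i.e. a combination of the `ψ_{I,d}`.
A form of degree `d` vanishing on the plane `∑ ζᵢ = 1`, which `λ` covers, vanishes by
homogeneity; hence the `ψ_{I,d} ∘ λ` are linearly independent.
-/

open Finset

/-- The set of multi-indices `(i, j, k)` of natural numbers with `i + j + k = d`. -/
def triIdx (d : ℕ) : Finset (ℕ × ℕ × ℕ) :=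
  (Finset.range (d + 1) ×ˢ Finset.range (d + 1) ×ˢ Finset.range (d + 1)).filter
    (fun I => I.1 + I.2.1 + I.2.2 = d)

/-- The bivariate Bernstein polynomial `ψ_{I,d}(ζ) = (d!/(i! j! k!)) ζ₁^i ζ₂^j ζ₃^k`. -/
noncomputable def bern (d : ℕ) (ζ₁ ζ₂ ζ₃ : ℝ) (I : ℕ × ℕ × ℕ) : ℝ :=
  (Nat.factorial d : ℝ) /
    ((Nat.factorial I.1 : ℝ) * (Nat.factorial I.2.1 : ℝ) * (Nat.factorial I.2.2 : ℝ)) *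
    ζ₁ ^ I.1 * ζ₂ ^ I.2.1 * ζ₃ ^ I.2.2

open MvPolynomial

theorem AffineIndependent.eq_of_sum_smul_eq {k V ι : Type*} [Ring k] [AddCommGroup V]
    [Module k V] [Fintype ι] {v : ι → V} (hv : AffineIndependent k v) {w w' : ι → k}
    (hw : ∑ i, w i = 1) (hw' : ∑ i, w' i = 1) (h : ∑ i, w i • v i = ∑ i, w' i • v i) :
    w = w' := by
  refine (affineIndependent_iff_eq_of_fintype_affineCombination_eq k v).1 hv w w' hw hw' ?_
  rwa [Finset.affineCombination_eq_linear_combination _ _ _ hw,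
    Finset.affineCombination_eq_linear_combination _ _ _ hw']

namespace MvPolynomial

noncomputable def evalFun {X σ R : Type*} [CommSemiring R] (g : X → σ → R) :
    MvPolynomial σ R →ₗ[R] X → R :=
  LinearMap.pi fun x => (aeval (g x)).toLinearMap

@[simp]
theorem evalFun_apply {X σ R : Type*} [CommSemiring R] (g : X → σ → R) (p : MvPolynomial σ R)
    (x : X) : evalFun g p x = eval (g x) p := by
  simp [evalFun]

theorem eval_monomial_one_fintype {σ R : Type*} [Fintype σ] [CommSemiring R] (s : σ →₀ ℕ)
    (x : σ → R) : eval x (monomial s 1) = ∏ i, x i ^ s i := by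
  rw [eval_monomial, one_mul, Finsupp.prod_fintype _ _ fun _ => pow_zero _]

noncomputable def affinePoly {k : Type*} [CommRing k] {n : ℕ} (f : (Fin n → k) → k) :
    MvPolynomial (Fin n) k :=
  C (f 0) + ∑ j, C (f (Pi.single j 1) - f 0) * X j

theorem totalDegree_affinePoly_le {k : Type*} [CommRing k] {n : ℕ} (f : (Fin n → k) → k) :
    (affinePoly f).totalDegree ≤ 1 := by
  refine (totalDegree_add _ _).trans (max_le (by simp) ?_)
  refine (totalDegree_finsetSum _ _).trans (Finset.sup_le fun j _ => ?_)
  exact (isHomogeneous_C_mul_X _ j).totalDegree_le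

theorem IsHomogeneous.eval_smul {σ R : Type*} [CommSemiring R]
    {φ : MvPolynomial σ R} {n : ℕ} (hφ : φ.IsHomogeneous n) (c : R) (x : σ → R) :
    eval (c • x) φ = c ^ n * eval x φ := by
  simp only [eval_eq, Finset.mul_sum, Pi.smul_apply, smul_eq_mul, mul_pow,
    Finset.prod_mul_distrib, Finset.prod_pow_eq_pow_sum]
  refine Finset.sum_congr rfl fun s hs => ?_
  have hs : s.degree = n := by
    rw [Finsupp.degree_eq_weight_one]; exact hφ (mem_support_iff.mp hs)
  rw [← Finsupp.degree_apply, hs]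
  ring

theorem IsHomogeneous.eq_zero_of_eval_eq_zero_of_sum_eq_one {σ k : Type*}
    [Fintype σ] [Nonempty σ] [Field k] [Infinite k] {φ : MvPolynomial σ k} {n : ℕ}
    (hφ : φ.IsHomogeneous n) (h : ∀ ζ : σ → k, ∑ i, ζ i = 1 → eval ζ φ = 0) : φ = 0 := by
  have hsum : (∑ i, X i : MvPolynomial σ k) ≠ 0 := by
    obtain ⟨i₀⟩ := ‹Nonempty σ›
    classical
    intro h
    simpa using congrArg (eval (Pi.single i₀ 1)) h
  -- by homogeneity `φ` vanishes wherever `∑ i, ζ i ≠ 0`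
  have hmul : φ * ∑ i, X i = 0 := by
    refine MvPolynomial.funext fun ζ => ?_
    simp only [map_mul, map_sum, eval_X, map_zero]
    by_cases hs : ∑ i, ζ i = 0
    · rw [hs, mul_zero]
    · have h1 : ∑ i, ((∑ i, ζ i)⁻¹ • ζ) i = 1 := by
        simp only [Pi.smul_apply, smul_eq_mul, ← Finset.mul_sum, inv_mul_cancel₀ hs]
      have := hφ.eval_smul (∑ i, ζ i) ((∑ i, ζ i)⁻¹ • ζ)
      rw [smul_smul, mul_inv_cancel₀ hs, one_smul, h _ h1, mul_zero] at this
      rw [this, zero_mul]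
  exact (mul_eq_zero.mp hmul).resolve_right hsum

end MvPolynomial

def IsBarycentric {k V ι : Type*} [Ring k] [AddCommGroup V] [Module k V] [Fintype ι]
    (v : ι → V) (lam : V → ι → k) : Prop :=
  ∀ x, (∑ i, lam x i = 1) ∧ (∑ i, lam x i • v i = x)

namespace IsBarycentric

section
variable {k V ι : Type*} [Ring k] [AddCommGroup V] [Module k V] [Fintype ι]
  {v : ι → V} {lam : V → ι → k}

theorem apply_sum_smul (hlam : IsBarycentric v lam) (hv : AffineIndependent k v)
    {w : ι → k} (hw : ∑ i, w i = 1) : lam (∑ i, w i • v i) = w :=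
  hv.eq_of_sum_smul_eq (hlam _).1 hw (hlam _).2

end

variable {k ι : Type*} [Field k] [Fintype ι] {n : ℕ}
  {v : ι → Fin n → k} {lam : (Fin n → k) → ι → k}

theorem apply_eq_add_sum (hlam : IsBarycentric v lam) (hv : AffineIndependent k v)
    (x : Fin n → k) :
    lam x = lam 0 + ∑ j, x j • (lam (Pi.single j 1) - lam 0) := by
  refine hv.eq_of_sum_smul_eq (hlam x).1 ?_ ?_
  · simp only [Pi.add_apply, Finset.sum_apply, Pi.smul_apply, Pi.sub_apply, smul_eq_mul,
      Finset.sum_add_distrib]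
    rw [Finset.sum_comm]
    simp [← Finset.mul_sum, (hlam _).1]
  · simp only [Pi.add_apply, Finset.sum_apply, Pi.smul_apply, Pi.sub_apply, smul_eq_mul,
      add_smul, Finset.sum_add_distrib, Finset.sum_smul, sub_smul, mul_smul]
    rw [Finset.sum_comm]
    simp only [← Finset.smul_sum, Finset.sum_sub_distrib, (hlam _).2, sub_zero, zero_add]
    ext j
    simp [Finset.sum_apply, Pi.single_apply]

theorem eval_affinePoly (hlam : IsBarycentric v lam) (hv : AffineIndependent k v)
    (x : Fin n → k) (i : ι) : eval x (affinePoly (lam · i)) = lam x i := by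
  rw [hlam.apply_eq_add_sum hv x]
  simp [affinePoly, mul_comm]

theorem evalFun_monomial_mem_map_restrictTotalDegree (hlam : IsBarycentric v lam)
    (hv : AffineIndependent k v) (s : ι →₀ ℕ) :
    evalFun lam (monomial s 1) ∈ (restrictTotalDegree (Fin n) k s.degree).map (evalFun id) := by
  refine ⟨∏ i, affinePoly (lam · i) ^ s i, (mem_restrictTotalDegree _ _ _).2 ?_, ?_⟩
  · refine (totalDegree_finsetProd _ _).trans ?_
    rw [Finsupp.degree_eq_sum]
    refine Finset.sum_le_sum fun i _ => (totalDegree_pow _ _).trans ?_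
    simpa using Nat.mul_le_mul_left (s i) (totalDegree_affinePoly_le (lam · i))
  · ext x
    simp [eval_monomial_one_fintype, hlam.eval_affinePoly hv]

theorem evalFun_monomial_mem_map_homogeneousSubmodule (hlam : IsBarycentric v lam)
    {d : ℕ} {s : Fin n →₀ ℕ} (hs : s.degree ≤ d) :
    evalFun id (monomial s 1) ∈ (homogeneousSubmodule ι k d).map (evalFun lam) := by
  refine ⟨(∏ j, (∑ i, C (v i j) * X i) ^ s j) * (∑ i, X i) ^ (d - s.degree), ?_, ?_⟩
  · have hL : ∀ j, (∑ i, C (v i j) * X i : MvPolynomial ι k).IsHomogeneous 1 := fun j =>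
      IsHomogeneous.sum _ _ 1 fun i _ => isHomogeneous_C_mul_X (v i j) i
    have hS : (∑ i, X i : MvPolynomial ι k).IsHomogeneous 1 :=
      IsHomogeneous.sum _ _ 1 fun i _ => isHomogeneous_X k i
    have h := (IsHomogeneous.prod univ _ _ fun j _ => (hL j).pow (s j)).mul
      (hS.pow (d - s.degree))
    simp only [one_mul, ← Finsupp.degree_eq_sum] at h
    rwa [Nat.add_sub_cancel' hs] at h
  · ext x
    have hcoord : ∀ j, ∑ i, v i j * lam x i = x j := fun j => by
      simpa [Finset.sum_apply, mul_comm] using congrFun (hlam x).2 j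
    simp [eval_monomial_one_fintype, hcoord, (hlam x).1]

theorem map_evalFun_homogeneousSubmodule (hlam : IsBarycentric v lam)
    (hv : AffineIndependent k v) (d : ℕ) :
    (homogeneousSubmodule ι k d).map (evalFun lam) =
      (restrictTotalDegree (Fin n) k d).map (evalFun id) := by
  apply le_antisymm
  · rw [homogeneousSubmodule_eq_finsupp_supported, ← restrictSupport, restrictSupport_eq_span,
      Submodule.map_span, Submodule.span_le]
    rintro _ ⟨_, ⟨s, hs, rfl⟩, rfl⟩
    exact hs ▸ hlam.evalFun_monomial_mem_map_restrictTotalDegree hv s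
  · rw [restrictTotalDegree, restrictSupport_eq_span, Submodule.map_span, Submodule.span_le]
    rintro _ ⟨_, ⟨s, hs, rfl⟩, rfl⟩
    exact hlam.evalFun_monomial_mem_map_homogeneousSubmodule hs

theorem disjoint_homogeneousSubmodule_ker_evalFun [Infinite k] [Nonempty ι]
    (hlam : IsBarycentric v lam) (hv : AffineIndependent k v) (d : ℕ) :
    Disjoint (homogeneousSubmodule ι k d) (LinearMap.ker (evalFun lam)) := by
  refine Submodule.disjoint_def.2 fun q hq hker => ?_
  refine IsHomogeneous.eq_zero_of_eval_eq_zero_of_sum_eq_one hq fun ζ hζ => ?_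
  rw [← hlam.apply_sum_smul hv hζ]
  exact congrFun (LinearMap.mem_ker.1 hker) _

end IsBarycentric

theorem LinearIndependent.existsUnique_sum_smul_eq {ι R M : Type*} [Fintype ι] [Semiring R]
    [AddCommMonoid M] [Module R M] {v : ι → M} (hv : LinearIndependent R v) {x : M}
    (hx : x ∈ Submodule.span R (Set.range v)) : ∃! b : ι → R, ∑ i, b i • v i = x := by
  obtain ⟨b, hb⟩ := (Submodule.mem_span_range_iff_exists_fun R).1 hx
  exact ⟨b, hb, fun b' hb' => funext (Fintype.linearIndependent_iffₛ.1 hv _ _ (hb'.trans hb.symm))⟩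

theorem mem_triIdx {d : ℕ} {I : ℕ × ℕ × ℕ} : I ∈ triIdx d ↔ I.1 + I.2.1 + I.2.2 = d := by
  simp only [triIdx, Finset.mem_filter, Finset.mem_product, Finset.mem_range]
  omega

noncomputable def bernCoeff (d : ℕ) (I : ℕ × ℕ × ℕ) : ℝ :=
  d.factorial / (I.1.factorial * I.2.1.factorial * I.2.2.factorial)

theorem bernCoeff_ne_zero (d : ℕ) (I : ℕ × ℕ × ℕ) : bernCoeff d I ≠ 0 := by
  unfold bernCoeff
  positivity

noncomputable def bernExp (I : ℕ × ℕ × ℕ) : Fin 3 →₀ ℕ :=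
  Finsupp.single 0 I.1 + Finsupp.single 1 I.2.1 + Finsupp.single 2 I.2.2

theorem bernExp_injective : Function.Injective bernExp := fun I J h => by
  ext
  · simpa [bernExp] using DFunLike.congr_fun h 0
  · simpa [bernExp] using DFunLike.congr_fun h 1
  · simpa [bernExp] using DFunLike.congr_fun h 2

theorem degree_bernExp (I : ℕ × ℕ × ℕ) : (bernExp I).degree = I.1 + I.2.1 + I.2.2 := by
  simp [bernExp]

noncomputable def bernPoly (d : ℕ) (I : ℕ × ℕ × ℕ) : MvPolynomial (Fin 3) ℝ :=
  monomial (bernExp I) (bernCoeff d I)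

theorem eval_bernPoly (d : ℕ) (I : ℕ × ℕ × ℕ) (ζ : Fin 3 → ℝ) :
    eval ζ (bernPoly d I) = bern d (ζ 0) (ζ 1) (ζ 2) I := by
  rw [bernPoly, eval_monomial, Finsupp.prod_fintype _ _ fun _ => pow_zero _, Fin.prod_univ_three]
  simp [bernExp, bern, bernCoeff, mul_assoc]

theorem linearIndependent_bernPoly (d : ℕ) :
    LinearIndependent ℝ (fun I : triIdx d => bernPoly d I) := by
  have hmon : LinearIndependent ℝ
      fun I : triIdx d => (monomial (bernExp I) 1 : MvPolynomial (Fin 3) ℝ) :=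
    (basisMonomials (Fin 3) ℝ).linearIndependent.comp (bernExp ∘ Subtype.val)
      (bernExp_injective.comp Subtype.val_injective)
  have h := hmon.units_smul fun I => Units.mk0 (bernCoeff d I) (bernCoeff_ne_zero d I)
  convert h using 1
  funext I
  simp [bernPoly, smul_monomial]

theorem span_bernPoly (d : ℕ) :
    Submodule.span ℝ (Set.range fun I : triIdx d => bernPoly d I) =
      homogeneousSubmodule (Fin 3) ℝ d := by
  apply le_antisymm
  · rw [Submodule.span_le]
    rintro _ ⟨⟨I, hI⟩, rfl⟩
    exact isHomogeneous_monomial _ ((degree_bernExp I).trans (mem_triIdx.1 hI))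
  · rw [homogeneousSubmodule_eq_finsupp_supported, ← restrictSupport, restrictSupport_eq_span,
      Submodule.span_le]
    rintro _ ⟨s, hs, rfl⟩
    have hI : (s 0, s 1, s 2) ∈ triIdx d := by
      rw [mem_triIdx]; simpa [Finsupp.degree_eq_sum, Fin.sum_univ_three] using hs
    have hs : bernExp (s 0, s 1, s 2) = s := by
      ext j; fin_cases j <;> simp [bernExp]
    have : monomial s 1 = (bernCoeff d (s 0, s 1, s 2))⁻¹ • bernPoly d (s 0, s 1, s 2) := by
      rw [bernPoly, hs, smul_monomial, smul_eq_mul, inv_mul_cancel₀ (bernCoeff_ne_zero _ _)]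
    change monomial s 1 ∈ _
    rw [this]
    exact Submodule.smul_mem _ _ (Submodule.subset_span ⟨⟨_, hI⟩, rfl⟩)

/-- Given a nondegenerate triangle `v 0, v 1, v 2` in the plane with barycentric
coordinate functions `lam`, the Bernstein polynomials of degree `d` composed with the
barycentric coordinates form a basis of the space of polynomial functions of total
degree at most `d`: they are linearly independent, their span is exactly the set of
functions given by evaluation of a polynomial of total degree at most `d`, and every
such polynomial function has a unique representation with Bézier ordinates `b`. -/
theorem bernstein_basis_of_polynomials (d : ℕ) (v : Fin 3 → (Fin 2 → ℝ))
    (hv : AffineIndependent ℝ v)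
    (lam : (Fin 2 → ℝ) → Fin 3 → ℝ)
    (hlam : ∀ x : Fin 2 → ℝ, (∑ i, lam x i = 1) ∧ (∑ i, lam x i • v i = x)) :
    LinearIndependent ℝ
      (fun I : triIdx d =>
        (fun x => bern d (lam x 0) (lam x 1) (lam x 2) (I : ℕ × ℕ × ℕ) :
          (Fin 2 → ℝ) → ℝ)) ∧
    ((Submodule.span ℝ
        (Set.range (fun I : triIdx d =>
          (fun x => bern d (lam x 0) (lam x 1) (lam x 2) (I : ℕ × ℕ × ℕ) :
            (Fin 2 → ℝ) → ℝ))) : Set ((Fin 2 → ℝ) → ℝ)) =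
      {f : (Fin 2 → ℝ) → ℝ | ∃ p : MvPolynomial (Fin 2) ℝ,
        p.totalDegree ≤ d ∧ ∀ x, f x = MvPolynomial.eval x p}) ∧
    (∀ p : MvPolynomial (Fin 2) ℝ, p.totalDegree ≤ d →
      ∃! b : triIdx d → ℝ, ∀ x : Fin 2 → ℝ,
        MvPolynomial.eval x p =
          ∑ I : triIdx d, b I * bern d (lam x 0) (lam x 1) (lam x 2) (I : ℕ × ℕ × ℕ)) := by
  have hlam : IsBarycentric v lam := hlam
  have hfun : (fun I : triIdx d => fun x => bern d (lam x 0) (lam x 1) (lam x 2) I) =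
      evalFun lam ∘ fun I : triIdx d => bernPoly d I := by
    ext I x
    simp [eval_bernPoly]
  have hspan : Submodule.span ℝ (Set.range (evalFun lam ∘ fun I : triIdx d => bernPoly d I)) =
      (restrictTotalDegree (Fin 2) ℝ d).map (evalFun id) := by
    rw [Set.range_comp, ← Submodule.map_span, span_bernPoly,
      hlam.map_evalFun_homogeneousSubmodule hv]
  have hli : LinearIndependent ℝ (evalFun lam ∘ fun I : triIdx d => bernPoly d I) :=
    (linearIndependent_bernPoly d).map (by
      rw [span_bernPoly]; exact hlam.disjoint_homogeneousSubmodule_ker_evalFun hv d)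
  rw [hfun]
  refine ⟨hli, ?_, fun p hp => ?_⟩
  · rw [hspan]
    ext f
    simp [mem_restrictTotalDegree, funext_iff, eq_comm]
  · have hmem : evalFun id p ∈
        Submodule.span ℝ (Set.range (evalFun lam ∘ fun I : triIdx d => bernPoly d I)) :=
      hspan ▸ ⟨p, (mem_restrictTotalDegree _ _ _).2 hp, rfl⟩
    refine (existsUnique_congr fun b => ?_).1 (hli.existsUnique_sum_smul_eq hmem)
    simp [funext_iff, Finset.sum_apply, eval_bernPoly, eq_comm]
end

section
/- Let u, v, w : ℝ² → ℝ be smooth functions, with v and w compactly supported. Then the trilinear integral of the von Karman bracket is symmetric under exchanging the last two arguments: ∫_{ℝ²} [u, v] w dx = ∫_{ℝ²} [u, w] v dx. -/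
/-!
Using the symmetry of mixed partial derivatives, the bracket is in divergence form,
`[u, v] = ∂_y (u_xx v_y - u_xy v_x) + ∂_x (u_yy v_x - u_xy v_y)`.
Integrating by parts against the compactly supported `w` then gives
`∫ [u, v] w = -∫ (u_xx v_y w_y + u_yy v_x w_x - u_xy (v_x w_y + v_y w_x))`,
which is symmetric in `v` and `w`.
-/

open MeasureTheory

/-- Partial derivative of `f : ℝ × ℝ → ℝ` in the `x` direction. -/
noncomputable def pdx (f : ℝ × ℝ → ℝ) (z : ℝ × ℝ) : ℝ :=
  fderiv ℝ f z (1, 0)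

/-- Partial derivative of `f : ℝ × ℝ → ℝ` in the `y` direction. -/
noncomputable def pdy (f : ℝ × ℝ → ℝ) (z : ℝ × ℝ) : ℝ :=
  fderiv ℝ f z (0, 1)

/-- The von Karman bracket `[u, v] = u_xx v_yy + u_yy v_xx − 2 u_xy v_xy`. -/
noncomputable def vkBracket (u v : ℝ × ℝ → ℝ) (z : ℝ × ℝ) : ℝ :=
  pdx (pdx u) z * pdy (pdy v) z + pdy (pdy u) z * pdx (pdx v) z -
    2 * pdx (pdy u) z * pdx (pdy v) z

theorem fderiv_mul_sub_mul_apply {E : Type*} [NormedAddCommGroup E] [NormedSpace ℝ E]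
    {a b c d : E → ℝ} {z : E} (ha : DifferentiableAt ℝ a z) (hb : DifferentiableAt ℝ b z)
    (hc : DifferentiableAt ℝ c z) (hd : DifferentiableAt ℝ d z) (v : E) :
    fderiv ℝ (fun x ↦ a x * b x - c x * d x) z v =
      fderiv ℝ a z v * b z + a z * fderiv ℝ b z v -
        (fderiv ℝ c z v * d z + c z * fderiv ℝ d z v) := by
  rw [((ha.hasFDerivAt.fun_mul hb.hasFDerivAt).fun_sub
    (hc.hasFDerivAt.fun_mul hd.hasFDerivAt)).fderiv]
  simp only [sub_apply, add_apply, smul_apply, smul_eq_mul]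
  ring

section IntegrationByParts

variable {E : Type*} [NormedAddCommGroup E] [NormedSpace ℝ E] [FiniteDimensional ℝ E]
  [MeasurableSpace E] [BorelSpace E] {μ : Measure E} [μ.IsAddHaarMeasure]

theorem integral_fderiv_mul_eq_neg_integral_mul_fderiv {f g : E → ℝ} (hf : ContDiff ℝ 1 f)
    (hg : ContDiff ℝ 1 g) (hg' : HasCompactSupport g) (v : E) :
    ∫ x, fderiv ℝ f x v * g x ∂μ = -∫ x, f x * fderiv ℝ g x v ∂μ := by
  have hfv : Continuous fun x ↦ fderiv ℝ f x v :=
    (hf.continuous_fderiv one_ne_zero).clm_apply continuous_const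
  have hgv : Continuous fun x ↦ fderiv ℝ g x v :=
    (hg.continuous_fderiv one_ne_zero).clm_apply continuous_const
  rw [integral_mul_fderiv_eq_neg_fderiv_mul_of_integrable, neg_neg]
  · exact (hfv.mul hg.continuous).integrable_of_hasCompactSupport hg'.mul_left
  · exact (hf.continuous.mul hgv).integrable_of_hasCompactSupport
      (hg'.fderiv_apply (𝕜 := ℝ) v).mul_left
  · exact (hf.continuous.mul hg.continuous).integrable_of_hasCompactSupport hg'.mul_left
  · exact fun x _ ↦ hf.differentiable one_ne_zero x
  · exact fun x _ ↦ hg.differentiable one_ne_zero x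

end IntegrationByParts

section PartialDerivatives

variable {f g : ℝ × ℝ → ℝ}

theorem ContDiff.pdx {n m : WithTop ℕ∞} (hf : ContDiff ℝ n f) (hmn : m + 1 ≤ n) :
    ContDiff ℝ m (pdx f) :=
  (hf.fderiv_right hmn).clm_apply contDiff_const

theorem ContDiff.pdy {n m : WithTop ℕ∞} (hf : ContDiff ℝ n f) (hmn : m + 1 ≤ n) :
    ContDiff ℝ m (pdy f) :=
  (hf.fderiv_right hmn).clm_apply contDiff_const

theorem pdx_pdy_comm (hf : ContDiff ℝ 2 f) : pdx (pdy f) = pdy (pdx f) := by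
  ext z
  have hd : DifferentiableAt ℝ (fderiv ℝ f) z :=
    (hf.fderiv_right (m := 1) le_rfl).differentiable one_ne_zero z
  have hsymm := hf.contDiffAt.isSymmSndFDerivAt (x := z) (by simp) (1, 0) (0, 1)
  change fderiv ℝ (fun y ↦ fderiv ℝ f y (0, 1)) z (1, 0) =
    fderiv ℝ (fun y ↦ fderiv ℝ f y (1, 0)) z (0, 1)
  simp only [fderiv_clm_apply hd (differentiableAt_const _)]
  simpa using hsymm

theorem integral_pdx_mul (hf : ContDiff ℝ 1 f) (hg : ContDiff ℝ 1 g)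
    (hg' : HasCompactSupport g) :
    ∫ z, pdx f z * g z = -∫ z, f z * pdx g z :=
  integral_fderiv_mul_eq_neg_integral_mul_fderiv hf hg hg' (1, 0)

theorem integral_pdy_mul (hf : ContDiff ℝ 1 f) (hg : ContDiff ℝ 1 g)
    (hg' : HasCompactSupport g) :
    ∫ z, pdy f z * g z = -∫ z, f z * pdy g z :=
  integral_fderiv_mul_eq_neg_integral_mul_fderiv hf hg hg' (0, 1)

end PartialDerivatives

theorem vkBracket_eq_pdy_add_pdx {u v : ℝ × ℝ → ℝ} (hu : ContDiff ℝ 3 u) (hv : ContDiff ℝ 2 v)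
    (z : ℝ × ℝ) :
    vkBracket u v z =
      pdy (fun z ↦ pdx (pdx u) z * pdy v z - pdx (pdy u) z * pdx v z) z +
        pdx (fun z ↦ pdy (pdy u) z * pdx v z - pdx (pdy u) z * pdy v z) z := by
  have hux : ContDiff ℝ 2 (pdx u) := hu.pdx (by norm_num)
  have huy : ContDiff ℝ 2 (pdy u) := hu.pdy (by norm_num)
  have huxx : DifferentiableAt ℝ (pdx (pdx u)) z := (hux.pdx le_rfl).differentiable one_ne_zero z
  have huyy : DifferentiableAt ℝ (pdy (pdy u)) z := (huy.pdy le_rfl).differentiable one_ne_zero z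
  have huxy : DifferentiableAt ℝ (pdx (pdy u)) z := (huy.pdx le_rfl).differentiable one_ne_zero z
  have hvx : DifferentiableAt ℝ (pdx v) z := (hv.pdx le_rfl).differentiable one_ne_zero z
  have hvy : DifferentiableAt ℝ (pdy v) z := (hv.pdy le_rfl).differentiable one_ne_zero z
  have hdy : pdy (fun z ↦ pdx (pdx u) z * pdy v z - pdx (pdy u) z * pdx v z) z =
      pdy (pdx (pdx u)) z * pdy v z + pdx (pdx u) z * pdy (pdy v) z -
        (pdy (pdx (pdy u)) z * pdx v z + pdx (pdy u) z * pdy (pdx v) z) :=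
    fderiv_mul_sub_mul_apply huxx hvy huxy hvx (0, 1)
  have hdx : pdx (fun z ↦ pdy (pdy u) z * pdx v z - pdx (pdy u) z * pdy v z) z =
      pdx (pdy (pdy u)) z * pdx v z + pdy (pdy u) z * pdx (pdx v) z -
        (pdx (pdx (pdy u)) z * pdy v z + pdx (pdy u) z * pdx (pdy v) z) :=
    fderiv_mul_sub_mul_apply huyy hvx huxy hvy (1, 0)
  rw [hdy, hdx, vkBracket, ← pdx_pdy_comm hux, ← pdx_pdy_comm (hu.of_le (by norm_num)),
    pdx_pdy_comm huy, ← pdx_pdy_comm hv]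
  ring

theorem integral_vkBracket_mul {u v w : ℝ × ℝ → ℝ} (hu : ContDiff ℝ 3 u) (hv : ContDiff ℝ 2 v)
    (hw : ContDiff ℝ 1 w) (hw' : HasCompactSupport w) :
    ∫ z, vkBracket u v z * w z =
      -∫ z, (pdx (pdx u) z * (pdy v z * pdy w z) + pdy (pdy u) z * (pdx v z * pdx w z) -
        pdx (pdy u) z * (pdx v z * pdy w z + pdy v z * pdx w z)) := by
  set F := fun z ↦ pdx (pdx u) z * pdy v z - pdx (pdy u) z * pdx v z
  set G := fun z ↦ pdy (pdy u) z * pdx v z - pdx (pdy u) z * pdy v z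
  have hdiv : ∀ z, vkBracket u v z = pdy F z + pdx G z := vkBracket_eq_pdy_add_pdx hu hv
  have hux : ContDiff ℝ 2 (pdx u) := hu.pdx (by norm_num)
  have huy : ContDiff ℝ 2 (pdy u) := hu.pdy (by norm_num)
  have hF : ContDiff ℝ 1 F :=
    ((hux.pdx le_rfl).mul (hv.pdy le_rfl)).sub ((huy.pdx le_rfl).mul (hv.pdx le_rfl))
  have hG : ContDiff ℝ 1 G :=
    ((huy.pdy le_rfl).mul (hv.pdx le_rfl)).sub ((huy.pdx le_rfl).mul (hv.pdy le_rfl))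
  have hintegrable {f g : ℝ × ℝ → ℝ} (hf : Continuous f) (hg : Continuous g)
      (hg' : HasCompactSupport g) : Integrable fun z ↦ f z * g z :=
    (hf.mul hg).integrable_of_hasCompactSupport hg'.mul_left
  have hwx : HasCompactSupport (pdx w) := hw'.fderiv_apply (𝕜 := ℝ) (1, 0)
  have hwy : HasCompactSupport (pdy w) := hw'.fderiv_apply (𝕜 := ℝ) (0, 1)
  calc ∫ z, vkBracket u v z * w z = ∫ z, (pdy F z * w z + pdx G z * w z) := by
        simp_rw [hdiv, add_mul]
    _ = -∫ z, (F z * pdy w z + G z * pdx w z) := by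
        rw [integral_add (hintegrable (hF.pdy (m := 0) le_rfl).continuous hw.continuous hw')
            (hintegrable (hG.pdx (m := 0) le_rfl).continuous hw.continuous hw'),
          integral_pdy_mul hF hw hw', integral_pdx_mul hG hw hw',
          integral_add (hintegrable hF.continuous (hw.pdy (m := 0) le_rfl).continuous hwy)
            (hintegrable hG.continuous (hw.pdx (m := 0) le_rfl).continuous hwx), neg_add]
    _ = _ := by
        congr 2 with z
        ring

/-- For smooth `u, v, w` with `v` and `w` compactly supported, the trilinear integral
of the von Karman bracket is symmetric under exchanging the last two arguments:
`∫ [u, v] w = ∫ [u, w] v`. -/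
theorem vonKarman_trilinear_symm
    (u v w : ℝ × ℝ → ℝ)
    (hu : ContDiff ℝ (⊤ : ℕ∞) u) (hv : ContDiff ℝ (⊤ : ℕ∞) v)
    (hw : ContDiff ℝ (⊤ : ℕ∞) w)
    (hv' : HasCompactSupport v) (hw' : HasCompactSupport w) :
    ∫ z : ℝ × ℝ, vkBracket u v z * w z = ∫ z : ℝ × ℝ, vkBracket u w z * v z := by
  have hsmooth {f : ℝ × ℝ → ℝ} {n : ℕ} (hf : ContDiff ℝ (⊤ : ℕ∞) f) : ContDiff ℝ n f :=
    hf.of_le (by exact_mod_cast le_top)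
  rw [integral_vkBracket_mul (hsmooth hu) (hsmooth hv) (hsmooth hw) hw',
    integral_vkBracket_mul (hsmooth hu) (hsmooth hw) (hsmooth hv) hv']
  congr 2 with z
  ring
end
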